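/- Let n ≥ 1, let A be an IFM of order n, let λ ∈ (0,1) and let p > 0 be a real number. If for some index j one has (A^m)μ s j → 1 and (A^m)ν s j → 0 as m → ∞ for every index s (powers taken with the maxgeneralized mean–mingeneralized mean operation), then there is a critical path from a critical vertex to j. -/

import Mathlib

/-!
Let `c < 1` bound every entry of `Aμ` that is not `1`. The weighted power mean
`M(x, y) = (λ xᵖ + (1 - λ) yᵖ)^(1/p)` is monotone and satisfies `M(x, 1) < 1` and `M(1, y) < 1`
for `x, y < 1`. By induction on `r`, there is a single `b < 1` bounding `(Aᵐ)μ s w` for all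
`m ≥ r` and all `s` whenever no walk of length `r` along edges with `Aμ = 1` ends at `w`: the last
step of `Aᵐ⁺¹ = Aᵐ ∘ A` either uses an edge with `Aμ t w ≤ c`, costing at most `M(1, c)`, or an
edge with `Aμ t w = 1`, and then no walk of length `r - 1` ends at `t`, costing at most `M(b', 1)`
for the bound `b'` of step `r - 1`. Hence `(Aᵐ)μ s j → 1` forces such a walk of length
`n` ending at `j`; these edges are critical, and by pigeonhole the walk repeats a vertex, which
gives a critical circuit followed by a critical path to `j`.
-/

open Filter Topology

/-- `A` (given by membership part `Amu` and non-membership part `Anu`) is an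
intuitionistic fuzzy matrix. -/
def IsIFM (n : ℕ) (Amu Anu : Fin n → Fin n → ℝ) : Prop :=
  ∀ i j, 0 ≤ Amu i j ∧ 0 ≤ Anu i j ∧ Amu i j + Anu i j ≤ 1

/-- Powers of an IFM under the maxgeneralized mean–mingeneralized mean operation
with parameters `lam` and exponent `p`:
`A^1 = A` and `A^(k+1) = A^k ∘ A`, where
`(X ∘ A)μ i j = max_t (lam·(Xμ i t)^p + (1-lam)·(Aμ t j)^p)^(1/p)` and
`(X ∘ A)ν i j = min_t (lam·(Xν i t)^p + (1-lam)·(Aν t j)^p)^(1/p)`.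
(The value at `0` is irrelevant; it is set to `A`.) -/
noncomputable def gmPow (n : ℕ) (lam p : ℝ) (Amu Anu : Fin n → Fin n → ℝ) :
    ℕ → (Fin n → Fin n → ℝ) × (Fin n → Fin n → ℝ)
  | 0 => (Amu, Anu)
  | 1 => (Amu, Anu)
  | m + 2 =>
    let X := gmPow n lam p Amu Anu (m + 1)
    (fun i j => ⨆ t : Fin n, (lam * X.1 i t ^ p + (1 - lam) * Amu t j ^ p) ^ (1 / p),
     fun i j => ⨅ t : Fin n, (lam * X.2 i t ^ p + (1 - lam) * Anu t j ^ p) ^ (1 / p))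

/-- The edge `(i,j)` is critical: `Aμ i j = 1` and `Aν i j = 0`. -/
def CritEdge (n : ℕ) (Amu Anu : Fin n → Fin n → ℝ) (i j : Fin n) : Prop :=
  Amu i j = 1 ∧ Anu i j = 0

/-- `v` is a critical vertex: it lies on some critical circuit. -/
def CritVertex (n : ℕ) (Amu Anu : Fin n → Fin n → ℝ) (v : Fin n) : Prop :=
  ∃ h : ℕ, 1 ≤ h ∧ ∃ Q : Fin (h + 1) → Fin n,
    Q 0 = Q (Fin.last h) ∧
    (∀ k : Fin h, CritEdge n Amu Anu (Q k.castSucc) (Q k.succ)) ∧ ∃ k, Q k = v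

/-- There is a critical path (of some length `m ≥ 1`) from a critical vertex to `j`. -/
def CritPathTo (n : ℕ) (Amu Anu : Fin n → Fin n → ℝ) (j : Fin n) : Prop :=
  ∃ m : ℕ, 1 ≤ m ∧ ∃ P : Fin (m + 1) → Fin n,
    CritVertex n Amu Anu (P 0) ∧ P (Fin.last m) = j ∧
    ∀ k : Fin m, CritEdge n Amu Anu (P k.castSucc) (P k.succ)

noncomputable def genMean (lam p x y : ℝ) : ℝ :=
  (lam * x ^ p + (1 - lam) * y ^ p) ^ (1 / p)

section genMean

variable {lam p x y : ℝ}

theorem genMean_comm : genMean lam p x y = genMean (1 - lam) p y x := by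
  unfold genMean
  ring_nf

@[simp]
theorem genMean_one_one : genMean lam p 1 1 = 1 := by
  simp [genMean]

theorem genMean_mono (hlam : lam ∈ Set.Icc (0 : ℝ) 1) (hp : 0 ≤ p) {x' y' : ℝ}
    (hx : 0 ≤ x) (hxx' : x ≤ x') (hy : 0 ≤ y) (hyy' : y ≤ y') :
    genMean lam p x y ≤ genMean lam p x' y' := by
  have : 0 ≤ 1 - lam := sub_nonneg.2 hlam.2
  have := hlam.1
  unfold genMean
  gcongr

theorem genMean_mem_Icc (hlam : lam ∈ Set.Icc (0 : ℝ) 1) (hp : 0 ≤ p)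
    (hx : x ∈ Set.Icc (0 : ℝ) 1) (hy : y ∈ Set.Icc (0 : ℝ) 1) :
    genMean lam p x y ∈ Set.Icc (0 : ℝ) 1 := by
  have : 0 ≤ 1 - lam := sub_nonneg.2 hlam.2
  refine ⟨Real.rpow_nonneg ?_ _, ?_⟩
  · have := hlam.1
    have := Real.rpow_nonneg hx.1 p
    have := Real.rpow_nonneg hy.1 p
    positivity
  · simpa using genMean_mono hlam hp hx.1 hx.2 hy.1 hy.2

theorem genMean_lt_one_of_left (hlam : lam ∈ Set.Ioc (0 : ℝ) 1) (hp : 0 < p)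
    (hx : x ∈ Set.Ico (0 : ℝ) 1) : genMean lam p x 1 < 1 := by
  obtain ⟨hl0, hl1⟩ := hlam
  have hxp : x ^ p < 1 := Real.rpow_lt_one hx.1 hx.2 hp
  have hxp0 : 0 ≤ x ^ p := Real.rpow_nonneg hx.1 p
  unfold genMean
  rw [Real.one_rpow]
  exact Real.rpow_lt_one (by nlinarith) (by nlinarith) (by positivity)

theorem genMean_lt_one_of_right (hlam : lam ∈ Set.Ico (0 : ℝ) 1) (hp : 0 < p)
    (hy : y ∈ Set.Ico (0 : ℝ) 1) : genMean lam p 1 y < 1 := by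
  rw [genMean_comm]
  exact genMean_lt_one_of_left ⟨by linarith [hlam.2], by linarith [hlam.1]⟩ hp hy

end genMean

theorem exists_mem_Ico_forall_le_of_lt_one {ι : Type*} [Finite ι] (f : ι → ℝ) :
    ∃ c ∈ Set.Ico (0 : ℝ) 1, ∀ i, f i < 1 → f i ≤ c := by
  have h : ∀ᶠ c in 𝓝[<] (1 : ℝ), ∀ i, f i < 1 → f i ≤ c := eventually_all.2 fun i => by
    by_cases hi : f i < 1
    · filter_upwards [Ioo_mem_nhdsLT hi] with c hc _ using hc.1.le
    · exact Eventually.of_forall fun _ h => absurd h hi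
  exact (Eventually.and (p := (· ∈ Set.Ico (0 : ℝ) 1)) (Ico_mem_nhdsLT zero_lt_one) h).exists

/-- Only `P 0, …, P m` matter. -/
def HasWalkTo {α : Type*} (R : α → α → Prop) (m : ℕ) (w : α) : Prop :=
  ∃ P : ℕ → α, P m = w ∧ ∀ k < m, R (P k) (P (k + 1))

namespace HasWalkTo

variable {α : Type*} {R S : α → α → Prop} {m : ℕ} {t w : α}

theorem zero : HasWalkTo R 0 w :=
  ⟨fun _ => w, rfl, by simp⟩

theorem snoc (h : HasWalkTo R m t) (htw : R t w) : HasWalkTo R (m + 1) w := by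
  obtain ⟨P, hPm, hP⟩ := h
  refine ⟨fun k => if k ≤ m then P k else w, by simp, fun k hk => ?_⟩
  rcases Nat.lt_succ_iff_lt_or_eq.1 hk with hk | rfl
  · simpa [hk.le, Nat.succ_le_of_lt hk] using hP k hk
  · simpa [hPm] using htw

theorem mono (h : HasWalkTo R m w) (hRS : ∀ a b, R a b → S a b) : HasWalkTo S m w := by
  obtain ⟨P, hPm, hP⟩ := h
  exact ⟨P, hPm, fun k hk => hRS _ _ (hP k hk)⟩

end HasWalkTo

section gmPow

variable {n : ℕ} {lam p : ℝ} {Amu Anu : Fin n → Fin n → ℝ}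

theorem gmPow_add_two_fst (m : ℕ) (i j : Fin n) :
    (gmPow n lam p Amu Anu (m + 2)).1 i j =
      ⨆ t, genMean lam p ((gmPow n lam p Amu Anu (m + 1)).1 i t) (Amu t j) :=
  rfl

theorem gmPow_fst_mem_Icc (hAmu : ∀ i j, Amu i j ∈ Set.Icc (0 : ℝ) 1)
    (hlam : lam ∈ Set.Icc (0 : ℝ) 1) (hp : 0 ≤ p) (m : ℕ) (i j : Fin n) :
    (gmPow n lam p Amu Anu m).1 i j ∈ Set.Icc (0 : ℝ) 1 := by
  induction m using Nat.twoStepInduction generalizing i j with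
  | zero => exact hAmu i j
  | one => exact hAmu i j
  | more m _ ih =>
    have hmem t := genMean_mem_Icc hlam hp (ih i t) (hAmu t j)
    rw [gmPow_add_two_fst]
    exact ⟨Real.iSup_nonneg fun t => (hmem t).1, Real.iSup_le (fun t => (hmem t).2) zero_le_one⟩

/-- The bound `b` is uniform in `w`, which is what lets the induction on `r` go through. -/
theorem exists_gmPow_fst_le_of_not_hasWalkTo (hAmu : ∀ i j, Amu i j ∈ Set.Icc (0 : ℝ) 1)
    (hlam : lam ∈ Set.Ioo (0 : ℝ) 1) (hp : 0 < p) {c : ℝ} (hc : c ∈ Set.Ico (0 : ℝ) 1)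
    (hAc : ∀ i j, Amu i j < 1 → Amu i j ≤ c) (r : ℕ) :
    ∃ b ∈ Set.Ico (0 : ℝ) 1, ∀ w, ¬ HasWalkTo (fun i j => Amu i j = 1) r w →
      ∀ m ≥ r, ∀ s, (gmPow n lam p Amu Anu m).1 s w ≤ b := by
  induction r with
  | zero => exact ⟨0, ⟨le_rfl, zero_lt_one⟩, fun w hw => absurd HasWalkTo.zero hw⟩
  | succ r ih =>
    obtain ⟨b, hb, hbound⟩ := ih
    have hl : lam ∈ Set.Icc (0 : ℝ) 1 := Set.Ioo_subset_Icc_self hlam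
    have hbc : genMean lam p b 1 < 1 := genMean_lt_one_of_left ⟨hlam.1, hlam.2.le⟩ hp hb
    have hcb : genMean lam p 1 c < 1 := genMean_lt_one_of_right ⟨hlam.1.le, hlam.2⟩ hp hc
    refine ⟨max c (max (genMean lam p b 1) (genMean lam p 1 c)),
      ⟨le_max_of_le_left hc.1, max_lt hc.2 (max_lt hbc hcb)⟩, fun w hw m hm s => ?_⟩
    have hlast t (ht : Amu t w = 1) : ¬ HasWalkTo (fun i j => Amu i j = 1) r t :=
      fun h => hw (h.snoc ht)
    have hle_c t (ht : Amu t w ≠ 1) : Amu t w ≤ c := hAc t w ((hAmu t w).2.lt_of_ne ht)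
    obtain _ | _ | m := m
    · omega
    · obtain rfl : r = 0 := by omega
      exact le_max_of_le_left (hle_c s fun h => hlast s h HasWalkTo.zero)
    rw [gmPow_add_two_fst]
    refine Real.iSup_le (fun t => ?_) (le_max_of_le_left hc.1)
    have hX := gmPow_fst_mem_Icc (Anu := Anu) hAmu hl hp.le (m + 1) s t
    by_cases ht : Amu t w = 1
    · calc genMean lam p _ (Amu t w) ≤ genMean lam p b 1 :=
            genMean_mono hl hp.le hX.1 (hbound t (hlast t ht) (m + 1) (by omega) s)
              (hAmu t w).1 ht.le
        _ ≤ _ := le_max_of_le_right (le_max_left _ _)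
    · calc genMean lam p _ (Amu t w) ≤ genMean lam p 1 c :=
            genMean_mono hl hp.le hX.1 hX.2 (hAmu t w).1 (hle_c t ht)
        _ ≤ _ := le_max_of_le_right (le_max_right _ _)

theorem hasWalkTo_of_tendsto_gmPow_fst (hAmu : ∀ i j, Amu i j ∈ Set.Icc (0 : ℝ) 1)
    (hlam : lam ∈ Set.Ioo (0 : ℝ) 1) (hp : 0 < p) {s j : Fin n}
    (hlim : Tendsto (fun m => (gmPow n lam p Amu Anu m).1 s j) atTop (𝓝 1)) (r : ℕ) :
    HasWalkTo (fun i j => Amu i j = 1) r j := by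
  by_contra hw
  obtain ⟨c, hc, hAc⟩ := exists_mem_Ico_forall_le_of_lt_one fun ij : Fin n × Fin n => Amu ij.1 ij.2
  obtain ⟨b, hb, hbound⟩ := exists_gmPow_fst_le_of_not_hasWalkTo (Anu := Anu) hAmu hlam hp hc
    (fun i j => hAc (i, j)) r
  have : 1 ≤ b := le_of_tendsto hlim (eventually_atTop.2 ⟨r, fun m hm => hbound j hw m hm s⟩)
  exact absurd hb.2 this.not_gt

end gmPow

theorem exists_lt_le_map_eq_of_card_le {α : Type*} [Fintype α] (P : ℕ → α) {m : ℕ}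
    (hm : Fintype.card α ≤ m) : ∃ a b, a < b ∧ b ≤ m ∧ P a = P b := by
  obtain ⟨a, ha, b, hb, hab, heq⟩ :=
    Finset.exists_ne_map_eq_of_card_lt_of_maps_to (s := Finset.range (m + 1))
      (t := Finset.univ) (by simpa [Nat.lt_succ_iff] using hm) (f := P)
      fun _ _ => Finset.mem_coe.2 (Finset.mem_univ _)
  rw [Finset.mem_range, Nat.lt_succ_iff] at ha hb
  rcases hab.lt_or_gt with h | h
  · exact ⟨a, b, h, hb, heq⟩
  · exact ⟨b, a, h, ha, heq.symm⟩

section CritPath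

variable {n : ℕ} {Amu Anu : Fin n → Fin n → ℝ} {P : ℕ → Fin n} {m : ℕ}

theorem critEdge_segment (hP : ∀ k < m, CritEdge n Amu Anu (P k) (P (k + 1))) {a b : ℕ}
    (hb : b ≤ m) (k : Fin (b - a)) :
    CritEdge n Amu Anu (P (a + k.castSucc)) (P (a + k.succ)) := by
  simpa [Fin.val_succ, ← add_assoc] using hP (a + k) (by omega)

theorem critVertex_of_eq (hP : ∀ k < m, CritEdge n Amu Anu (P k) (P (k + 1))) {a b : ℕ}
    (hab : a < b) (hb : b ≤ m) (heq : P a = P b) : CritVertex n Amu Anu (P a) :=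
  ⟨b - a, by omega, fun i => P (a + i), by simpa [Nat.add_sub_cancel' hab.le] using heq,
    critEdge_segment hP hb, 0, by simp⟩

theorem critPathTo_of_hasWalkTo {j : Fin n} (h : HasWalkTo (CritEdge n Amu Anu) n j) :
    CritPathTo n Amu Anu j := by
  obtain ⟨P, hPn, hP⟩ := h
  obtain ⟨a, b, hab, hb, heq⟩ := exists_lt_le_map_eq_of_card_le P (Fintype.card_fin n).le
  refine ⟨n - a, by omega, fun i => P (a + i), by simpa using critVertex_of_eq hP hab hb heq,
    by simpa [Nat.add_sub_cancel' (hab.trans_le hb).le] using hPn, critEdge_segment hP le_rfl⟩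

end CritPath

theorem gmPow_column_one_implies_critPath (n : ℕ)
    (Amu Anu : Fin n → Fin n → ℝ) (hA : IsIFM n Amu Anu)
    (lam p : ℝ) (hlam : lam ∈ Set.Ioo (0 : ℝ) 1) (hp : 0 < p) (j : Fin n)
    (hcol : ∀ s : Fin n,
      Tendsto (fun m => (gmPow n lam p Amu Anu m).1 s j) atTop (𝓝 1) ∧
      Tendsto (fun m => (gmPow n lam p Amu Anu m).2 s j) atTop (𝓝 0)) :
    CritPathTo n Amu Anu j := by
  have hAmu : ∀ i j, Amu i j ∈ Set.Icc (0 : ℝ) 1 := fun i j => ⟨(hA i j).1, by linarith [hA i j]⟩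
  have hcrit : ∀ i j, Amu i j = 1 → CritEdge n Amu Anu i j :=
    fun i j h => ⟨h, by linarith [hA i j]⟩
  exact critPathTo_of_hasWalkTo
    ((hasWalkTo_of_tendsto_gmPow_fst hAmu hlam hp (hcol j).1 n).mono hcrit)
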